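/- arXiv:1402.1526 — 3 statements merged into one kernel-verified Lean document; each statement's English description precedes it below -/
import Mathlib

section
/- In the query release zero-sum game where the data player chooses x ∈ X to minimize payoff A(x,q) = q(D) - q(x) and the query player chooses q ∈ Q to maximize it, if Q is closed under negation (for each q ∈ Q the query q̄ with q̄(x) = 1 - q(x) is also in Q), then the value of the game is 0. -/
/-!
Write `E_u f = ∑ₓ u x f x` and let `u_D` be the empirical distribution of `D`, so that
`q(D) = E_{u_D} q`. Against a mixed strategy `u` of the data player the query player has a pure
best response, and the payoff of `q` is `E_{u_D} q - E_u q`. Playing `u = u_D` makes every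
payoff vanish, so the value is at most `0`; conversely the negation `1 - q` has payoff
`-(E_{u_D} q - E_u q)`, so one of `q`, `1 - q` has nonnegative payoff against any `u`.
-/

open Finset

theorem Finset.sup'_nonneg_of_forall_exists_neg {ι : Type*} {s : Finset ι} (hs : s.Nonempty)
    {f : ι → ℝ} (hneg : ∀ i ∈ s, ∃ j ∈ s, f j = -f i) : 0 ≤ s.sup' hs f := by
  obtain ⟨i, hi⟩ := hs
  obtain ⟨j, hj, hfj⟩ := hneg i hi
  rcases le_total 0 (f i) with hfi | hfi
  · exact le_sup'_of_le f hi hfi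
  · exact le_sup'_of_le f hj (by linarith)

section Simplex

variable {ι κ : Type*} [Fintype ι] [Fintype κ]

theorem sum_stdSimplex_mul_sub {u : ι → ℝ} (hu : u ∈ stdSimplex ℝ ι) (c : ℝ) (f : ι → ℝ) :
    ∑ i, u i * (c - f i) = c - ∑ i, u i * f i := by
  simp only [mul_sub, sum_sub_distrib, ← sum_mul, hu.2, one_mul]

theorem isGreatest_image_stdSimplex_sum_mul [Nonempty ι] (a : ι → ℝ) :
    IsGreatest ((fun w => ∑ i, w i * a i) '' stdSimplex ℝ ι) (univ.sup' univ_nonempty a) := by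
  classical
  obtain ⟨i₀, -, hi₀⟩ := exists_mem_eq_sup' univ_nonempty a
  refine ⟨⟨Pi.single i₀ 1, single_mem_stdSimplex ℝ i₀, by simp [hi₀, Pi.single_apply]⟩, ?_⟩
  rintro _ ⟨w, hw, rfl⟩
  calc ∑ i, w i * a i ≤ ∑ i, w i * univ.sup' univ_nonempty a :=
        sum_le_sum fun i hi => mul_le_mul_of_nonneg_left (le_sup' a hi) (hw.1 i)
    _ = univ.sup' univ_nonempty a := by rw [← sum_mul, hw.2, one_mul]

theorem sSup_image_stdSimplex_sum_sum_mul [Nonempty κ] (A : ι → κ → ℝ) (u : ι → ℝ) :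
    sSup ((fun w => ∑ i, ∑ j, u i * w j * A i j) '' stdSimplex ℝ κ) =
      univ.sup' univ_nonempty (fun j => ∑ i, u i * A i j) := by
  have hpayoff : (fun w : κ → ℝ => ∑ i, ∑ j, u i * w j * A i j) =
      fun w => ∑ j, w j * ∑ i, u i * A i j := by
    ext w
    rw [sum_comm]
    simp only [mul_sum]
    exact sum_congr rfl fun j _ => sum_congr rfl fun i _ => by ring
  rw [hpayoff]
  exact (isGreatest_image_stdSimplex_sum_mul _).csSup_eq

end Simplex

section Empirical

variable {X : Type*} [Fintype X] [DecidableEq X]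

theorem Multiset.sum_map_eq_sum_count_mul (D : Multiset X) (f : X → ℝ) :
    (D.map f).sum = ∑ x, (D.count x : ℝ) * f x := by
  rw [sum_multiset_map_count, sum_subset (subset_univ _) fun x _ hx => by
    simp [Multiset.count_eq_zero_of_notMem (by simpa using hx)]]
  simp [nsmul_eq_mul]

noncomputable def Multiset.empiricalDist (D : Multiset X) : X → ℝ :=
  fun x => D.count x / D.card

theorem Multiset.sum_empiricalDist_mul (D : Multiset X) (f : X → ℝ) :
    ∑ x, D.empiricalDist x * f x = (D.map f).sum / D.card := by
  simp only [empiricalDist, sum_map_eq_sum_count_mul, sum_div]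
  exact sum_congr rfl fun x _ => by ring

theorem Multiset.empiricalDist_mem_stdSimplex {D : Multiset X} (hD : D ≠ 0) :
    D.empiricalDist ∈ stdSimplex ℝ X := by
  refine ⟨fun x => by unfold empiricalDist; positivity, ?_⟩
  have hcard : (D.card : ℝ) ≠ 0 := by exact_mod_cast Multiset.card_pos.mpr hD |>.ne'
  simpa [hcard] using D.sum_empiricalDist_mul 1

theorem sum_stdSimplex_mul_sub_empiricalDist (D : Multiset X) {u : X → ℝ}
    (hu : u ∈ stdSimplex ℝ X) (f : X → ℝ) :
    ∑ x, u x * ((D.map f).sum / D.card - f x) =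
      ∑ x, D.empiricalDist x * f x - ∑ x, u x * f x := by
  rw [sum_stdSimplex_mul_sub hu, D.sum_empiricalDist_mul]

end Empirical

theorem stmt1_general {X : Type*} [Fintype X]
    (D : Multiset X) (hD : D ≠ 0)
    (Q : Finset (X → ℝ)) (hQne : Q.Nonempty)
    (hQneg : ∀ q ∈ Q, (fun x => 1 - q x) ∈ Q) :
    sInf ((fun u : X → ℝ =>
        sSup ((fun w : {q // q ∈ Q} → ℝ =>
            ∑ x : X, ∑ q : {q // q ∈ Q},
              u x * w q * ((D.map q.1).sum / D.card - q.1 x)) ''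
          {w | (∀ q, 0 ≤ w q) ∧ ∑ q, w q = 1})) ''
      {u | (∀ x, 0 ≤ u x) ∧ ∑ x, u x = 1}) = 0 := by
  classical
  have : Nonempty Q := hQne.to_subtype
  change sInf ((fun u => sSup (_ '' stdSimplex ℝ _)) '' stdSimplex ℝ X) = 0
  simp_rw [sSup_image_stdSimplex_sum_sum_mul]
  refine IsLeast.csInf_eq ⟨⟨D.empiricalDist, D.empiricalDist_mem_stdSimplex hD, ?_⟩, ?_⟩
  · simp only [sum_stdSimplex_mul_sub_empiricalDist D (D.empiricalDist_mem_stdSimplex hD),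
      sub_self, sup'_const]
  · rintro _ ⟨u, hu, rfl⟩
    refine sup'_nonneg_of_forall_exists_neg univ_nonempty fun q _ =>
      ⟨⟨_, hQneg q.1 q.2⟩, mem_univ _, ?_⟩
    simp only [sum_stdSimplex_mul_sub_empiricalDist D hu,
      sum_stdSimplex_mul_sub (D.empiricalDist_mem_stdSimplex hD), sum_stdSimplex_mul_sub hu]
    ring

/-- In the query release zero-sum game with payoff `A(x,q) = q(D) - q(x)`, if the
finite nonempty query class `Q` (of `[0,1]`-valued linear queries) is closed under
negation, then the value of the game,
`min_{u ∈ Δ(X)} max_{w ∈ Δ(Q)} E_{x∼u,q∼w}[q(D) - q(x)]`, equals `0`. -/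
theorem stmt1 {X : Type*} [Fintype X] [Nonempty X]
    (D : Multiset X) (hD : D ≠ 0)
    (Q : Finset (X → ℝ)) (hQne : Q.Nonempty)
    (hQ01 : ∀ q ∈ Q, ∀ x, q x ∈ Set.Icc (0 : ℝ) 1)
    (hQneg : ∀ q ∈ Q, (fun x => 1 - q x) ∈ Q) :
    sInf ((fun u : X → ℝ =>
        sSup ((fun w : {q // q ∈ Q} → ℝ =>
            ∑ x : X, ∑ q : {q // q ∈ Q},
              u x * w q * ((D.map q.1).sum / D.card - q.1 x)) ''
          {w | (∀ q, 0 ≤ w q) ∧ ∑ q, w q = 1})) ''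
      {u | (∀ x, 0 ≤ u x) ∧ ∑ x, u x = 1}) = 0 :=
  stmt1_general D hD Q hQne hQneg
end

section
/- If the query class Q is closed under negation and (u*, w*) is an α-approximate mixed Nash equilibrium of the query release game with payoff A(x,q) = q(D) - q(x), then for every query q ∈ Q, |q(u*) - q(D)| ≤ α, where q(u*) = E_{x∼u*}[q(x)]. -/
open Finset

/-!
Against the pure query strategy `q`, the equilibrium bound for `u*` reads `q(D) - q(u*) ≤ α`.
Applied to the negated query `1 - q`, which also lies in `Q`, it gives `q(u*) - q(D) ≤ α`.
-/

lemma Multiset.sum_map_one_sub_div_card {X : Type*} {D : Multiset X} (hD : D ≠ 0) (f : X → ℝ) :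
    (D.map fun x => 1 - f x).sum / D.card = 1 - (D.map f).sum / D.card := by
  have hcard : (D.card : ℝ) ≠ 0 := by simpa using hD
  rw [Multiset.sum_map_sub, Multiset.map_const', Multiset.sum_replicate, nsmul_one, sub_div,
    div_self hcard]

lemma Finset.sum_mul_const_sub_of_sum_eq_one {X : Type*} [Fintype X] {u : X → ℝ}
    (hu : ∑ x, u x = 1) (c : ℝ) (f : X → ℝ) :
    ∑ x, u x * (c - f x) = c - ∑ x, u x * f x := by
  simp only [mul_sub]
  rw [Finset.sum_sub_distrib, ← Finset.sum_mul, hu, one_mul]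

/-- The payoff `A(u, q)` of a mixed data strategy against the pure query strategy `q`. -/
lemma payoff_pi_single {X : Type*} [Fintype X] (D : Multiset X) {Q : Finset (X → ℝ)}
    {u : X → ℝ} (hu : ∑ x, u x = 1) (q : {q // q ∈ Q}) :
    ∑ x : X, ∑ q' : {q // q ∈ Q},
        u x * Pi.single (M := fun _ => ℝ) q 1 q' * ((D.map q'.1).sum / D.card - q'.1 x) =
      (D.map q.1).sum / D.card - ∑ x, u x * q.1 x := by
  simp only [mul_assoc, ← Finset.mul_sum, Pi.single_apply, ite_mul, one_mul, zero_mul,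
    Finset.sum_ite_eq', Finset.mem_univ, if_true]
  exact Finset.sum_mul_const_sub_of_sum_eq_one hu _ _

theorem stmt2_general {X : Type*} [Fintype X]
    (D : Multiset X) (hD : D ≠ 0)
    (Q : Finset (X → ℝ))
    (hQneg : ∀ q ∈ Q, (fun x => 1 - q x) ∈ Q)
    (α : ℝ)
    (ustar : X → ℝ) (hu1 : ∑ x, ustar x = 1)
    -- `A(u*, w) ≤ v + α` for every mixed query strategy `w`, with `v = 0`:
    (heq1 : ∀ w : {q // q ∈ Q} → ℝ, (∀ q, 0 ≤ w q) → ∑ q, w q = 1 →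
      ∑ x : X, ∑ q : {q // q ∈ Q},
        ustar x * w q * ((D.map q.1).sum / D.card - q.1 x) ≤ 0 + α) :
    ∀ q ∈ Q, |(∑ x : X, ustar x * q x) - (D.map q).sum / D.card| ≤ α := by
  have pure_bound : ∀ q ∈ Q, (D.map q).sum / D.card - ∑ x, ustar x * q x ≤ α := by
    intro q hq
    have h := heq1 (Pi.single ⟨q, hq⟩ 1) (fun _ => by rw [Pi.single_apply]; positivity)
      (by simp)
    rwa [payoff_pi_single D hu1, zero_add] at h
  intro q hq
  have hneg := pure_bound _ (hQneg q hq)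
  rw [Multiset.sum_map_one_sub_div_card hD, Finset.sum_mul_const_sub_of_sum_eq_one hu1] at hneg
  rw [abs_le]
  constructor <;> linarith [pure_bound q hq]

/-- If the query class `Q` is closed under negation and `(u*, w*)` is an
`α`-approximate mixed Nash equilibrium of the query release game with payoff
`A(x,q) = q(D) - q(x)` (whose value is `0`), then every query `q ∈ Q` satisfies
`|q(u*) - q(D)| ≤ α`, where `q(u*) = E_{x ∼ u*}[q(x)]`. -/
theorem stmt2 {X : Type*} [Fintype X] [Nonempty X]
    (D : Multiset X) (hD : D ≠ 0)
    (Q : Finset (X → ℝ)) (hQne : Q.Nonempty)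
    (hQ01 : ∀ q ∈ Q, ∀ x, q x ∈ Set.Icc (0 : ℝ) 1)
    (hQneg : ∀ q ∈ Q, (fun x => 1 - q x) ∈ Q)
    (α : ℝ) (hα : 0 < α)
    (ustar : X → ℝ) (hu0 : ∀ x, 0 ≤ ustar x) (hu1 : ∑ x, ustar x = 1)
    (wstar : {q // q ∈ Q} → ℝ) (hw0 : ∀ q, 0 ≤ wstar q) (hw1 : ∑ q, wstar q = 1)
    -- `A(u*, w) ≤ v + α` for every mixed query strategy `w`, with `v = 0`:
    (heq1 : ∀ w : {q // q ∈ Q} → ℝ, (∀ q, 0 ≤ w q) → ∑ q, w q = 1 →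
      ∑ x : X, ∑ q : {q // q ∈ Q},
        ustar x * w q * ((D.map q.1).sum / D.card - q.1 x) ≤ 0 + α)
    -- `A(u, w*) ≥ v - α` for every mixed data strategy `u`, with `v = 0`:
    (heq2 : ∀ u : X → ℝ, (∀ x, 0 ≤ u x) → ∑ x, u x = 1 →
      ∑ x : X, ∑ q : {q // q ∈ Q},
        u x * wstar q * ((D.map q.1).sum / D.card - q.1 x) ≥ 0 - α) :
    ∀ q ∈ Q, |(∑ x : X, ustar x * q x) - (D.map q).sum / D.card| ≤ α :=
  stmt2_general D hD Q hQneg α ustar hu1 heq1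
end

section
/- The exponential mechanism, which on input database D outputs r ∈ R with probability proportional to exp(ε·S(D,r)/(2·GS_S)), is ε-differentially private, where GS_S = max over neighboring D, D' and r ∈ R of |S(D,r) - S(D',r)|. -/
open Finset

/-! Shifting every score by at most `c` multiplies the weight of a single output by at most
`exp c` and the normalising sum by at least `exp (-c)`, so a softmax probability changes by a
factor of at most `exp (2c)`. With scores `ε S / (2Δ)` and sensitivity `Δ`, `c = ε / 2`. -/

theorem div_le_mul_mul_div {a b A B k l : ℝ} (hA : 0 < A) (hB : 0 < B) (hb : 0 ≤ b)
    (hk : 0 ≤ k) (ha : a ≤ k * b) (hBA : B ≤ l * A) : a / A ≤ k * l * (b / B) := by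
  rw [div_le_iff₀ hA]
  calc a ≤ k * b := ha
    _ = k * (b / B) * B := by field_simp
    _ ≤ k * (b / B) * (l * A) := by gcongr
    _ = k * l * (b / B) * A := by ring

theorem exp_le_exp_mul_exp_of_abs_sub_le {x y c : ℝ} (h : |x - y| ≤ c) :
    Real.exp x ≤ Real.exp c * Real.exp y := by
  rw [← Real.exp_add, Real.exp_le_exp]
  linarith [(abs_le.mp h).2]

theorem exp_div_sum_exp_le_of_abs_sub_le {ι : Type*} [Fintype ι] {f g : ι → ℝ} {c : ℝ}
    (h : ∀ i, |f i - g i| ≤ c) (r : ι) :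
    Real.exp (f r) / ∑ i, Real.exp (f i) ≤
      Real.exp (2 * c) * (Real.exp (g r) / ∑ i, Real.exp (g i)) := by
  have hne : (univ : Finset ι).Nonempty := ⟨r, mem_univ r⟩
  have hsum_le : ∑ i, Real.exp (g i) ≤ Real.exp c * ∑ i, Real.exp (f i) := by
    rw [mul_sum]
    exact sum_le_sum fun i _ => exp_le_exp_mul_exp_of_abs_sub_le (abs_sub_comm (f i) (g i) ▸ h i)
  rw [two_mul, Real.exp_add]
  exact div_le_mul_mul_div (sum_pos (fun i _ => Real.exp_pos _) hne)
    (sum_pos (fun i _ => Real.exp_pos _) hne) (Real.exp_pos _).le (Real.exp_pos _).le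
    (exp_le_exp_mul_exp_of_abs_sub_le (h r)) hsum_le

theorem stmt8_general {X R : Type*} [Fintype R]
    (Neighbor : Multiset X → Multiset X → Prop)
    (S : Multiset X → R → ℝ) (ε Δ : ℝ) (hε : 0 ≤ ε) (hΔ : 0 < Δ)
    (hsens : ∀ D D', Neighbor D D' → ∀ r : R, |S D r - S D' r| ≤ Δ) :
    ∀ D D', Neighbor D D' → ∀ r : R,
      Real.exp (ε * S D r / (2 * Δ)) / (∑ r' : R, Real.exp (ε * S D r' / (2 * Δ))) ≤
        Real.exp ε *
          (Real.exp (ε * S D' r / (2 * Δ)) /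
            (∑ r' : R, Real.exp (ε * S D' r' / (2 * Δ)))) := by
  intro D D' hN r
  have hscaled : ∀ r', |ε * S D r' / (2 * Δ) - ε * S D' r' / (2 * Δ)| ≤ ε / 2 := fun r' =>
    calc |ε * S D r' / (2 * Δ) - ε * S D' r' / (2 * Δ)|
        = ε / (2 * Δ) * |S D r' - S D' r'| := by
          rw [← abs_of_nonneg (by positivity : 0 ≤ ε / (2 * Δ)), ← abs_mul]
          ring_nf
      _ ≤ ε / (2 * Δ) * Δ := by gcongr; exact hsens D D' hN r'
      _ = ε / 2 := by field_simp
  simpa only [mul_div_cancel₀ ε two_ne_zero] using exp_div_sum_exp_le_of_abs_sub_le hscaled r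

/-- The exponential mechanism: given a finite output range `R`, a score function
`S` whose sensitivity (with respect to neighboring databases) is at most `Δ`,
the mechanism that on input `D` outputs `r ∈ R` with probability proportional to
`exp(ε S(D,r) / (2Δ))` is `ε`-differentially private: for all outputs `r` and
neighboring `D, D'`, `Pr[M(D) = r] ≤ e^ε Pr[M(D') = r]`. -/
theorem stmt8 {X R : Type*} [Fintype R] [Nonempty R]
    (Neighbor : Multiset X → Multiset X → Prop)
    (S : Multiset X → R → ℝ) (ε Δ : ℝ) (hε : 0 ≤ ε) (hΔ : 0 < Δ)
    (hsens : ∀ D D', Neighbor D D' → ∀ r : R, |S D r - S D' r| ≤ Δ) :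
    ∀ D D', Neighbor D D' → ∀ r : R,
      Real.exp (ε * S D r / (2 * Δ)) / (∑ r' : R, Real.exp (ε * S D r' / (2 * Δ))) ≤
        Real.exp ε *
          (Real.exp (ε * S D' r / (2 * Δ)) /
            (∑ r' : R, Real.exp (ε * S D' r' / (2 * Δ)))) :=
  stmt8_general Neighbor S ε Δ hε hΔ hsens
end
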